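/- Let B(x) = (sin(πx)/π)² · ( ∑_{k=0}^∞ 1/(x−k)² − ∑_{n=1}^∞ 1/(x+n)² + 2/x ) for nonintegral x (extended by continuity to all of ℝ). Then B(x) ≥ sgn(x) for every real x, with strict inequality whenever x is not an integer. -/

import Mathlib

/-!
Differentiating the Mittag-Leffler expansion of `π cot (π x) - 1 / x` termwise gives
`∑_{k ≥ 0} (x - k)⁻² + ∑_{n ≥ 0} (x + n + 1)⁻² = (π / sin (π x))²` off the integers.
Multiplying by `q = (sin (π x) / π)²`, the defining formula becomes
`B x = 1 + 2 q (1 / x - ∑ (x + n + 1)⁻²)` and also `B x = -1 + 2 q (∑ (k - x)⁻² - 1 / (-x))`.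
For `a > 0` the telescoping sum `∑ (1 / (a + k) - 1 / (a + k + 1)) = 1 / a` lies strictly between
`∑ (a + k + 1)⁻²` and `∑ (a + k)⁻²`, which gives `B x > 1` for `x > 0` and `B x > -1` for `x < 0`.
At an integer, continuity of `B` passes the bound to the limit from the right, where `sgn` is no
smaller.
-/

open Real Filter Topology

lemma summable_one_div_add_sq (c : ℝ) : Summable fun k : ℕ => 1 / (c + k) ^ 2 := by
  have h := (Real.summable_one_div_nat_add_rpow c 2).mpr one_lt_two
  simpa [add_comm, sq_abs] using h

lemma summable_one_div_sub_sq (c : ℝ) : Summable fun k : ℕ => 1 / (c - k) ^ 2 :=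
  (summable_one_div_add_sq (-c)).congr fun k => by ring

lemma hasSum_sub_succ_of_antitone {f : ℕ → ℝ} {l : ℝ} (hf : Antitone f)
    (hl : Tendsto f atTop (𝓝 l)) : HasSum (fun n => f n - f (n + 1)) (f 0 - l) := by
  refine (hasSum_iff_tendsto_nat_of_nonneg (fun n => sub_nonneg.2 (hf n.le_succ)) _).2 ?_
  simp_rw [Finset.sum_range_sub']
  exact hl.const_sub _

lemma hasSum_one_div_add_sub_one_div_add_succ {a : ℝ} (ha : 0 < a) :
    HasSum (fun k : ℕ => 1 / (a + k) - 1 / (a + k + 1)) (1 / a) := by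
  have hanti : Antitone fun k : ℕ => 1 / (a + k) := fun m n hmn =>
    one_div_le_one_div_of_le (by positivity) (by gcongr)
  have hlim : Tendsto (fun k : ℕ => 1 / (a + k)) atTop (𝓝 0) :=
    tendsto_const_nhds.div_atTop (tendsto_atTop_add_const_left _ a tendsto_natCast_atTop_atTop)
  simpa [add_assoc] using hasSum_sub_succ_of_antitone hanti hlim

lemma one_div_sub_one_div_add_one {b : ℝ} (hb : 0 < b) :
    1 / b - 1 / (b + 1) = 1 / (b * (b + 1)) := by
  field_simp
  ring

lemma tsum_one_div_add_add_one_sq_lt {a : ℝ} (ha : 0 < a) :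
    ∑' k : ℕ, 1 / (a + k + 1) ^ 2 < 1 / a := by
  have htel := hasSum_one_div_add_sub_one_div_add_succ ha
  have hlt (k : ℕ) : 1 / (a + k + 1) ^ 2 < 1 / (a + k) - 1 / (a + k + 1) := by
    have hk : 0 < a + k := by positivity
    rw [one_div_sub_one_div_add_one hk]
    exact one_div_lt_one_div_of_lt (by positivity) (by nlinarith)
  rw [← htel.tsum_eq]
  exact Summable.tsum_lt_tsum (fun k => (hlt k).le) (hlt 0)
    ((summable_one_div_add_sq (a + 1)).congr fun k => by ring) htel.summable

lemma one_div_lt_tsum_one_div_add_sq {a : ℝ} (ha : 0 < a) :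
    1 / a < ∑' k : ℕ, 1 / (a + k) ^ 2 := by
  have htel := hasSum_one_div_add_sub_one_div_add_succ ha
  have hlt (k : ℕ) : 1 / (a + k) - 1 / (a + k + 1) < 1 / (a + k) ^ 2 := by
    have hk : 0 < a + k := by positivity
    rw [one_div_sub_one_div_add_one hk]
    exact one_div_lt_one_div_of_lt (by positivity) (by nlinarith)
  rw [← htel.tsum_eq]
  exact Summable.tsum_lt_tsum (fun k => (hlt k).le) (hlt 0) htel.summable
    (summable_one_div_add_sq a)

lemma sin_pi_mul_ne_zero_of_ne_intCast {x : ℝ} (hx : ∀ n : ℤ, x ≠ n) : sin (π * x) ≠ 0 := by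
  rw [Ne, sin_eq_zero_iff]
  rintro ⟨n, hn⟩
  exact hx n (mul_left_cancel₀ pi_ne_zero (by linarith))

lemma hasDerivAt_pi_mul_cot {x : ℝ} (hx : sin (π * x) ≠ 0) :
    HasDerivAt (fun y => π * cot (π * y)) (-(π / sin (π * x)) ^ 2) x := by
  have hsin := ((hasDerivAt_id x).const_mul π).sin
  have hcos := ((hasDerivAt_id x).const_mul π).cos
  simp only [id, mul_one] at hsin hcos
  simp only [cot_eq_cos_div_sin]
  refine ((hcos.fun_div hsin hx).const_mul π).congr_deriv ?_
  field_simp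
  linear_combination -sin_sq_add_cos_sq (π * x)

lemma hasSum_cot_sub_inv {x : ℝ} (hx : ∀ n : ℤ, x ≠ n) :
    HasSum (fun n : ℕ => 1 / (x - (n + 1)) + 1 / (x + (n + 1))) (π * cot (π * x) - 1 / x) := by
  have hz : (x : ℂ) ∈ Complex.integerComplement := by
    rintro ⟨n, hn⟩
    exact hx n (by exact_mod_cast hn.symm)
  rw [← Complex.hasSum_ofReal]
  convert (summable_cotTerm hz).hasSum using 1
  · ext n; push_cast; rfl
  · rw [← cot_series_rep' hz]; push_cast [Complex.ofReal_cot]; rfl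

lemma notMem_range_intCast_iff {x : ℝ} : x ∉ Set.range ((↑) : ℤ → ℝ) ↔ ∀ n : ℤ, x ≠ n := by
  simp [eq_comm]

lemma exists_pos_le_abs_sub_intCast {x : ℝ} (hx : ∀ n : ℤ, x ≠ n) :
    ∃ ε > 0, ∀ n : ℤ, ε ≤ |x - n| := by
  obtain ⟨ε, hε, hball⟩ :=
    Metric.isOpen_iff.1 Real.isOpen_compl_range_intCast x (notMem_range_intCast_iff.2 hx)
  refine ⟨ε, hε, fun n => not_lt.1 fun h => hball ?_ ⟨n, rfl⟩⟩
  rwa [Metric.mem_ball, Real.dist_eq, abs_sub_comm]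

lemma abs_sub_le_two_mul_abs_sub {x y c ε : ℝ} (hc : ε ≤ |x - c|) (hy : dist y x < ε / 2) :
    |x - c| ≤ 2 * |y - c| := by
  rw [Real.dist_eq] at hy
  linarith [abs_sub_le x y c, abs_sub_comm x y]

lemma sub_ne_zero_of_dist_lt {x y c ε : ℝ} (hε : 0 < ε) (hc : ε ≤ |x - c|)
    (hy : dist y x < ε / 2) : y - c ≠ 0 := by
  have := abs_sub_le_two_mul_abs_sub hc hy
  rw [← abs_pos]
  linarith

lemma one_div_sq_sub_le_four_mul {x y c ε : ℝ} (hε : 0 < ε) (hc : ε ≤ |x - c|)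
    (hy : dist y x < ε / 2) : 1 / (y - c) ^ 2 ≤ 4 * (1 / (x - c) ^ 2) := by
  have habs := abs_sub_le_two_mul_abs_sub hc hy
  have hx : 0 < |x - c| := hε.trans_le hc
  have hy : 0 < |y - c| := by linarith
  rw [← sq_abs (x - c), ← sq_abs (y - c), mul_one_div, div_le_div_iff₀ (by positivity)
    (by positivity)]
  nlinarith

lemma hasDerivAt_one_div_sub_add_one_div_add {y c : ℝ} (h₁ : y - c ≠ 0) (h₂ : y + c ≠ 0) :
    HasDerivAt (fun z => 1 / (z - c) + 1 / (z + c)) (-(1 / (y - c) ^ 2 + 1 / (y + c) ^ 2)) y := by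
  have := (((hasDerivAt_id y).sub_const c).fun_inv h₁).fun_add
    (((hasDerivAt_id y).add_const c).fun_inv h₂)
  simp only [id, one_div] at this ⊢
  exact this.congr_deriv (by ring)

lemma hasDerivAt_tsum_cotTerm {x : ℝ} (hx : ∀ n : ℤ, x ≠ n) :
    HasDerivAt (fun y : ℝ => ∑' n : ℕ, (1 / (y - (n + 1)) + 1 / (y + (n + 1))))
      (-(∑' n : ℕ, 1 / (x - (n + 1)) ^ 2 + ∑' n : ℕ, 1 / (x + (n + 1)) ^ 2)) x := by
  obtain ⟨ε, hε, hxε⟩ := exists_pos_le_abs_sub_intCast hx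
  have hxε' (n : ℕ) : ε ≤ |x - (n + 1)| ∧ ε ≤ |x - -(n + 1)| := by
    constructor
    · simpa using hxε (n + 1)
    · simpa using hxε (-(n + 1))
  have hbound (n : ℕ) {y : ℝ} (hy : dist y x < ε / 2) :
      1 / (y - (n + 1)) ^ 2 + 1 / (y + (n + 1)) ^ 2 ≤
        4 * (1 / (x - (n + 1)) ^ 2 + 1 / (x + (n + 1)) ^ 2) := by
    have h1 := one_div_sq_sub_le_four_mul hε (hxε' n).1 hy
    have h2 := one_div_sq_sub_le_four_mul hε (hxε' n).2 hy
    simp only [sub_neg_eq_add] at h2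
    linarith
  have hsub : Summable fun n : ℕ => 1 / (x - (n + 1)) ^ 2 := by
    simpa using (summable_nat_add_iff 1).2 (summable_one_div_sub_sq x)
  have hadd : Summable fun n : ℕ => 1 / (x + (n + 1)) ^ 2 :=
    (summable_one_div_add_sq (x + 1)).congr fun n => by ring
  have key := hasDerivAt_tsum_of_isPreconnected
    (g := fun (n : ℕ) (y : ℝ) => 1 / (y - (n + 1)) + 1 / (y + (n + 1)))
    (g' := fun (n : ℕ) (y : ℝ) => -(1 / (y - (n + 1)) ^ 2 + 1 / (y + (n + 1)) ^ 2))
    ((hsub.add hadd).mul_left 4) Metric.isOpen_ball (convex_ball x (ε / 2)).isPreconnected ?_ ?_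
    (Metric.mem_ball_self (half_pos hε)) (hasSum_cot_sub_inv hx).summable
    (Metric.mem_ball_self (half_pos hε))
  · simpa only [tsum_neg, hsub.tsum_add hadd] using key
  · intro n y hy
    have h₂ := sub_ne_zero_of_dist_lt hε (hxε' n).2 hy
    rw [sub_neg_eq_add] at h₂
    exact hasDerivAt_one_div_sub_add_one_div_add (sub_ne_zero_of_dist_lt hε (hxε' n).1 hy) h₂
  · intro n y hy
    rw [Real.norm_eq_abs, abs_neg, abs_of_nonneg (by positivity)]
    exact hbound n hy

theorem tsum_one_div_sub_sq_add_tsum_one_div_add_sq {x : ℝ} (hx : ∀ n : ℤ, x ≠ n) :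
    ∑' k : ℕ, 1 / (x - (k : ℝ)) ^ 2 + ∑' n : ℕ, 1 / (x + (n : ℝ) + 1) ^ 2 =
      (π / sin (π * x)) ^ 2 := by
  have hx0 : x ≠ 0 := by exact_mod_cast hx 0
  have hcot := (hasDerivAt_pi_mul_cot (sin_pi_mul_ne_zero_of_ne_intCast hx)).sub
    (hasDerivAt_inv hx0)
  have hseries : (fun y : ℝ => ∑' n : ℕ, (1 / (y - (n + 1)) + 1 / (y + (n + 1)))) =ᶠ[𝓝 x]
      fun y => π * cot (π * y) - y⁻¹ := by
    filter_upwards [Real.isOpen_compl_range_intCast.mem_nhds (notMem_range_intCast_iff.2 hx)]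
      with y hy
    rw [← one_div]
    exact (hasSum_cot_sub_inv (notMem_range_intCast_iff.1 hy)).tsum_eq
  have h := (hcot.congr_of_eventuallyEq hseries).unique (hasDerivAt_tsum_cotTerm hx)
  have hC : ∑' n : ℕ, 1 / (x + (n : ℝ) + 1) ^ 2 = ∑' n : ℕ, 1 / (x + (n + 1)) ^ 2 := by
    simp only [add_assoc]
  rw [← hC] at h
  rw [(summable_one_div_sub_sq x).tsum_eq_zero_add]
  simp only [Nat.cast_add, Nat.cast_one, Nat.cast_zero, sub_zero]
  linear_combination h

lemma sign_lt_sin_sq_mul_tsum {x : ℝ} (hx : ∀ n : ℤ, x ≠ n) :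
    Real.sign x < (sin (π * x) / π) ^ 2 *
      ((∑' k : ℕ, 1 / (x - (k : ℝ)) ^ 2) - (∑' n : ℕ, 1 / (x + (n : ℝ) + 1) ^ 2) + 2 / x) := by
  have hsin := sin_pi_mul_ne_zero_of_ne_intCast hx
  have hq : 0 < (sin (π * x) / π) ^ 2 := by positivity
  have hsum := tsum_one_div_sub_sq_add_tsum_one_div_add_sq hx
  set A := ∑' k : ℕ, 1 / (x - (k : ℝ)) ^ 2
  set C := ∑' n : ℕ, 1 / (x + (n : ℝ) + 1) ^ 2
  set q := (sin (π * x) / π) ^ 2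
  have hqAC : q * (A + C) = 1 := by
    rw [hsum, ← mul_pow]
    field_simp
  rcases (show x ≠ 0 by exact_mod_cast hx 0).lt_or_gt with hneg | hpos
  · have hA : 1 / -x < A := by
      rw [show A = ∑' k : ℕ, 1 / (-x + k) ^ 2 from tsum_congr fun k => by ring]
      exact one_div_lt_tsum_one_div_add_sq (neg_pos.2 hneg)
    have hAq : 0 < q * (A - 1 / -x) := mul_pos hq (by linarith)
    have e : q * (A - C + 2 / x) = -(q * (A + C)) + 2 * (q * (A - 1 / -x)) := by ring
    rw [Real.sign_of_neg hneg, e, hqAC]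
    linarith
  · have hC : C < 1 / x := tsum_one_div_add_add_one_sq_lt hpos
    have hCq : 0 < q * (1 / x - C) := mul_pos hq (by linarith)
    have e : q * (A - C + 2 / x) = q * (A + C) + 2 * (q * (1 / x - C)) := by ring
    rw [Real.sign_of_pos hpos, e, hqAC]
    linarith

lemma sign_intCast_le_of_continuous {f : ℝ → ℝ} (hf : Continuous f)
    (h : ∀ y : ℝ, (∀ n : ℤ, y ≠ n) → Real.sign y < f y) (m : ℤ) : Real.sign (m : ℝ) ≤ f m := by
  have hlim : Tendsto f (𝓝[>] (m : ℝ)) (𝓝 (f m)) :=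
    hf.continuousAt.tendsto.mono_left nhdsWithin_le_nhds
  refine ge_of_tendsto hlim ?_
  filter_upwards [Ioo_mem_nhdsGT (lt_add_one (m : ℝ))] with y ⟨hmy, hym⟩
  have hy : ∀ n : ℤ, y ≠ n := by
    rintro n rfl
    have h₁ : m < n := by exact_mod_cast hmy
    have h₂ : n < m + 1 := by exact_mod_cast hym
    omega
  refine le_trans ?_ (h y hy).le
  rcases le_or_gt 0 m with hm | hm
  · have hm' : (0 : ℝ) ≤ m := by exact_mod_cast hm
    rw [Real.sign_of_pos (show 0 < y by linarith)]
    rcases Real.sign_apply_eq (m : ℝ) with hs | hs | hs <;> rw [hs] <;> norm_num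
  · have hm' : (m : ℝ) + 1 ≤ 0 := by exact_mod_cast hm
    rw [Real.sign_of_neg (show y < 0 by linarith),
      Real.sign_of_neg (show (m : ℝ) < 0 by linarith)]

theorem stmt4 (B : ℝ → ℝ) (hBc : Continuous B)
    (hB : ∀ x : ℝ, (∀ n : ℤ, x ≠ (n:ℝ)) →
      B x = (Real.sin (π * x) / π)^2 *
        ((∑' k : ℕ, 1/(x - (k:ℝ))^2) - (∑' n : ℕ, 1/(x + (n:ℝ) + 1)^2) + 2/x)) :
    ∀ x : ℝ, Real.sign x ≤ B x ∧ ((∀ n : ℤ, x ≠ (n:ℝ)) → Real.sign x < B x) := by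
  have hstrict (x : ℝ) (hx : ∀ n : ℤ, x ≠ n) : Real.sign x < B x := by
    rw [hB x hx]
    exact sign_lt_sin_sq_mul_tsum hx
  intro x
  refine ⟨?_, hstrict x⟩
  by_cases hx : ∀ n : ℤ, x ≠ n
  · exact (hstrict x hx).le
  · push Not at hx
    obtain ⟨m, rfl⟩ := hx
    exact sign_intCast_le_of_continuous hBc hstrict m
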